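/- Let $A, B, X \in \mathbb{M}_n$ be such that the block matrix $M = \begin{bmatrix} A & X \\ X^* & B \end{bmatrix} \in \mathbb{M}_{2n}$ is positive semi-definite. Then for every symmetric norm $\|\cdot\|$ on $\mathbb{M}_{4n}$ one has $\| M \oplus M \| \le 2 \| A \oplus B \|$, where $S \oplus T$ denotes the block-diagonal matrix $\begin{bmatrix} S & 0 \\ 0 & T \end{bmatrix}$ and $A \oplus B \in \mathbb{M}_{2n}$ is embedded as the upper-left block of a matrix in $\mathbb{M}_{4n}$. -/

import Mathlib

/-!
Write `M = R * R` with `R = M^{1/2}` Hermitian and let `P = 1 ⊕ 0`, `Q = 0 ⊕ 1`. For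
`J = [[R P, 0], [R Q, 0]]` one has `J Jᴴ = R P R ⊕ R Q R` and
`Jᴴ J = (P M P + Q M Q) ⊕ 0 = (A ⊕ B) ⊕ 0`, and swapping `P` and `Q` gives a second such `J'`.
Since `Z Zᴴ` and `Zᴴ Z` are Hermitian with the same characteristic polynomial, they are unitarily
similar, so a symmetric norm takes the same value on them; the triangle inequality applied to
`M ⊕ M = J Jᴴ + J' J'ᴴ` gives the bound.
-/

open Matrix
open scoped ComplexOrder

/-- The absolute value `|Z| = (Zᴴ Z)^(1/2)` of a square complex matrix. -/
noncomputable def matAbs {m : Type*} [Fintype m] [DecidableEq m]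
    (Z : Matrix m m ℂ) : Matrix m m ℂ :=
  (Matrix.posSemidef_conjTranspose_mul_self Z).1.eigenvectorUnitary.1 *
    Matrix.diagonal ((↑) ∘ (√·) ∘ (Matrix.posSemidef_conjTranspose_mul_self Z).1.eigenvalues) *
    (star (Matrix.posSemidef_conjTranspose_mul_self Z).1.eigenvectorUnitary : Matrix m m ℂ)

/-- Functional calculus: apply `f : ℝ → ℝ` to the eigenvalues of a Hermitian matrix
(junk value `0` if the matrix is not Hermitian). -/
noncomputable def hermApply {m : Type*} [Fintype m] [DecidableEq m]
    (f : ℝ → ℝ) (S : Matrix m m ℂ) : Matrix m m ℂ :=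
  if hS : S.IsHermitian then
    (hS.eigenvectorUnitary : Matrix m m ℂ) *
      Matrix.diagonal (fun i => (f (hS.eigenvalues i) : ℂ)) *
      (star (hS.eigenvectorUnitary : Matrix m m ℂ))
  else 0

/-- Real power of a positive semi-definite matrix by functional calculus. -/
noncomputable def matPow {m : Type*} [Fintype m] [DecidableEq m]
    (S : Matrix m m ℂ) (p : ℝ) : Matrix m m ℂ :=
  hermApply (fun x => x ^ p) S

/-- A symmetric (unitarily invariant) norm on complex `m × m` matrices. -/
structure IsSymmetricNorm {m : Type*} [Fintype m] [DecidableEq m]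
    (N : Matrix m m ℂ → ℝ) : Prop where
  add_le : ∀ A B, N (A + B) ≤ N A + N B
  smul : ∀ (c : ℂ) (A), N (c • A) = ‖c‖ * N A
  eq_zero_of : ∀ A, N A = 0 → A = 0
  unitary_mul_left : ∀ (U : Matrix.unitaryGroup m ℂ) (A), N (U * A) = N A
  mul_unitary_right : ∀ (U : Matrix.unitaryGroup m ℂ) (A), N (A * U) = N A

/-- Eigenvalues of a Hermitian matrix (junk value `0` if not Hermitian). -/
noncomputable def eigVals {m : Type*} [Fintype m] [DecidableEq m]
    (Z : Matrix m m ℂ) : m → ℝ :=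
  if hZ : Z.IsHermitian then hZ.eigenvalues else 0

/-- Eigenvalues of a Hermitian `n × n` matrix listed in decreasing order. -/
noncomputable def eigDown {n : ℕ} (Z : Matrix (Fin n) (Fin n) ℂ) : Fin n → ℝ :=
  fun i => (eigVals Z ∘ Tuple.sort (eigVals Z)) i.rev

/-- `Z ^ ↓`: the diagonal matrix listing the eigenvalues of `Z` in decreasing order. -/
noncomputable def downMat {n : ℕ} (Z : Matrix (Fin n) (Fin n) ℂ) : Matrix (Fin n) (Fin n) ℂ :=
  Matrix.diagonal (fun i => (eigDown Z i : ℂ))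

/-- Schatten `p`-norm. -/
noncomputable def schattenNorm {m : Type*} [Fintype m] [DecidableEq m]
    (p : ℝ) (Z : Matrix m m ℂ) : ℝ :=
  (∑ i, eigVals (matAbs Z) i ^ p) ^ (1 / p)

/-- Operator norm (largest singular value). -/
noncomputable def opNormInf {m : Type*} [Fintype m] [DecidableEq m]
    (Z : Matrix m m ℂ) : ℝ :=
  ⨆ i, Real.sqrt (eigVals (Zᴴ * Z) i)

/-- Numerical range. -/
def numRange {m : Type*} [Fintype m] (X : Matrix m m ℂ) : Set ℂ :=
  {z | ∃ x : m → ℂ, ∑ i, ‖x i‖ ^ 2 = 1 ∧ dotProduct (star x) (X *ᵥ x) = z}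

/-- Numerical radius. -/
noncomputable def numRadius {m : Type*} [Fintype m] (X : Matrix m m ℂ) : ℝ :=
  sSup ((fun z : ℂ => ‖z‖) '' numRange X)

namespace IsSymmetricNorm

variable {m : Type*} [Fintype m] [DecidableEq m] {N : Matrix m m ℂ → ℝ}

lemma map_conj_unitary (hN : IsSymmetricNorm N) (U : unitaryGroup m ℂ) (A : Matrix m m ℂ) :
    N (U * A * star (U : Matrix m m ℂ)) = N A := by
  rw [hN.mul_unitary_right ⟨_, Unitary.star_mem U.2⟩, hN.unitary_mul_left]

lemma map_eq_of_charpoly_eq (hN : IsSymmetricNorm N) {A B : Matrix m m ℂ}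
    (hA : A.IsHermitian) (hB : B.IsHermitian) (h : A.charpoly = B.charpoly) : N A = N B := by
  have hAB := (hA.eigenvalues_eq_eigenvalues_iff hB).mpr h
  rw [hA.spectral_theorem, hB.spectral_theorem, Unitary.conjStarAlgAut_apply,
    Unitary.conjStarAlgAut_apply, hN.map_conj_unitary, hN.map_conj_unitary, hAB]

lemma map_mul_conjTranspose_self (hN : IsSymmetricNorm N) (Z : Matrix m m ℂ) :
    N (Z * Zᴴ) = N (Zᴴ * Z) :=
  hN.map_eq_of_charpoly_eq (isHermitian_mul_conjTranspose_self Z)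
    (isHermitian_conjTranspose_mul_self Z) (charpoly_mul_comm Z Zᴴ)

end IsSymmetricNorm

section Pinching

variable {m : Type*} [Fintype m] [DecidableEq m] {N : Matrix (m ⊕ m) (m ⊕ m) ℂ → ℝ}

lemma IsSymmetricNorm.map_fromBlocks_sandwich_eq_pinching (hN : IsSymmetricNorm N)
    {R P Q : Matrix m m ℂ} (hR : R.IsHermitian) (hP : P.IsHermitian) (hQ : Q.IsHermitian)
    (hPP : IsIdempotentElem P) (hQQ : IsIdempotentElem Q) (hPQ : P * Q = 0) :
    N (fromBlocks (R * P * R) 0 0 (R * Q * R)) =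
      N (fromBlocks (P * (R * R) * P + Q * (R * R) * Q) 0 0 0) := by
  have hQP : Q * P = 0 := by
    simpa [hP.eq, hQ.eq] using congrArg conjTranspose hPQ
  have := hN.map_mul_conjTranspose_self (fromBlocks (R * P) 0 (R * Q) 0)
  simp only [fromBlocks_conjTranspose, fromBlocks_multiply, conjTranspose_mul, hR.eq, hP.eq,
    hQ.eq, conjTranspose_zero, Matrix.mul_zero, Matrix.zero_mul, add_zero,
    ← Matrix.mul_assoc] at this
  simpa only [Matrix.mul_assoc R P, Matrix.mul_assoc R Q, Matrix.mul_assoc P R R,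
    Matrix.mul_assoc Q R R, hPP.eq, hQQ.eq, hPQ, hQP, Matrix.mul_zero, Matrix.zero_mul] using this

lemma IsSymmetricNorm.map_fromBlocks_self_le_two_mul_pinching (hN : IsSymmetricNorm N)
    {M P : Matrix m m ℂ} (hM : M.PosSemidef) (hP : P.IsHermitian) (hPP : IsIdempotentElem P) :
    N (fromBlocks M 0 0 M) ≤ 2 * N (fromBlocks (P * M * P + (1 - P) * M * (1 - P)) 0 0 0) := by
  obtain ⟨R, hR, rfl⟩ : ∃ R : Matrix m m ℂ, R.IsHermitian ∧ R * R = M :=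
    open scoped MatrixOrder in
    ⟨CFC.sqrt M, (CFC.sqrt_nonneg M).posSemidef.isHermitian, CFC.sqrt_mul_sqrt_self M hM.nonneg⟩
  set Q := 1 - P
  have hQ : Q.IsHermitian := isHermitian_one.sub hP
  have hPQ : P * Q = 0 := by simp [Q, mul_sub, hPP.eq]
  have hQP : Q * P = 0 := by simp [Q, sub_mul, hPP.eq]
  have hsplit : fromBlocks (R * R) 0 0 (R * R) =
      fromBlocks (R * P * R) 0 0 (R * Q * R) + fromBlocks (R * Q * R) 0 0 (R * P * R) := by
    simp [fromBlocks_add, Q, mul_sub, sub_mul]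
  calc N (fromBlocks (R * R) 0 0 (R * R))
      ≤ N (fromBlocks (R * P * R) 0 0 (R * Q * R)) + N (fromBlocks (R * Q * R) 0 0 (R * P * R)) :=
        hsplit ▸ hN.add_le _ _
    _ = 2 * N (fromBlocks (P * (R * R) * P + Q * (R * R) * Q) 0 0 0) := by
        rw [hN.map_fromBlocks_sandwich_eq_pinching hR hP hQ hPP hPP.one_sub hPQ,
          hN.map_fromBlocks_sandwich_eq_pinching hR hQ hP hPP.one_sub hPP hQP, add_comm (Q * _ * Q)]
        ring

end Pinching

theorem direct_sum_norm_bound {n : ℕ} (A B X : Matrix (Fin n) (Fin n) ℂ)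
    (hM : (Matrix.fromBlocks A X Xᴴ B).PosSemidef)
    (N : Matrix ((Fin n ⊕ Fin n) ⊕ (Fin n ⊕ Fin n)) ((Fin n ⊕ Fin n) ⊕ (Fin n ⊕ Fin n)) ℂ → ℝ)
    (hN : IsSymmetricNorm N) :
    N (Matrix.fromBlocks (Matrix.fromBlocks A X Xᴴ B) 0 0 (Matrix.fromBlocks A X Xᴴ B)) ≤
      2 * N (Matrix.fromBlocks (Matrix.fromBlocks A 0 0 B) 0 0 0) := by
  set P : Matrix (Fin n ⊕ Fin n) (Fin n ⊕ Fin n) ℂ := fromBlocks 1 0 0 0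
  have hP : P.IsHermitian := by simp [P, IsHermitian, fromBlocks_conjTranspose]
  have hPP : IsIdempotentElem P := by simp [P, IsIdempotentElem, fromBlocks_multiply]
  have hpinch : P * fromBlocks A X Xᴴ B * P + (1 - P) * fromBlocks A X Xᴴ B * (1 - P) =
      fromBlocks A 0 0 B := by
    simp [P, ← fromBlocks_one, sub_eq_add_neg, fromBlocks_neg, fromBlocks_add, fromBlocks_multiply]
  simpa only [hpinch] using hN.map_fromBlocks_self_le_two_mul_pinching hM hP hPP
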